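/- arXiv:1103.5856 — 5 statements merged into one kernel-verified Lean document; each statement's English description precedes it below -/
import Mathlib

section
/- Let q be an odd prime and let F be a finite field of characteristic q. Then the centralizer in SL(2,F) of any element X of SL(2,F) of order exactly 4 is a cyclic group. -/
open Matrix

private lemma ch2' {F : Type*} [Field F] (M : Matrix (Fin 2) (Fin 2) F) :
    M * M = (M 0 0 + M 1 1) • M - (M.det) • 1 := by
  ext i j
  fin_cases i <;> fin_cases j <;>
    simp [Matrix.mul_apply, Fin.sum_univ_two, Matrix.det_fin_two, Matrix.one_apply] <;> ring

private lemma span_uniq' {F : Type*} [Field F] (h2 : (2:F) ≠ 0)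
    (M : Matrix (Fin 2) (Fin 2) F) (htr : M 1 1 = - M 0 0)
    (hdet : M 0 0 * M 0 0 + M 0 1 * M 1 0 = -1) (a b a' b' : F)
    (h : a • (1 : Matrix (Fin 2) (Fin 2) F) + b • M = a' • 1 + b' • M) :
    a = a' ∧ b = b' := by
  have f00 := congrFun (congrFun h 0) 0
  have f01 := congrFun (congrFun h 0) 1
  have f10 := congrFun (congrFun h 1) 0
  have f11 := congrFun (congrFun h 1) 1
  simp only [Matrix.add_apply, Matrix.smul_apply, Matrix.one_apply, smul_eq_mul, htr,
    if_true, if_false, Fin.isValue, zero_ne_one, one_ne_zero, ite_true, ite_false,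
    reduceIte, mul_one, mul_zero, add_zero, zero_add, mul_neg] at f00 f01 f10 f11
  have ha : a = a' := by
    have h2a : 2 * a = 2 * a' := by linear_combination f00 + f11
    exact mul_left_cancel₀ h2 h2a
  refine ⟨ha, ?_⟩
  by_contra hbb
  have hsub : b - b' ≠ 0 := sub_ne_zero.mpr hbb
  have hM00 : M 0 0 = 0 := by
    have : (b - b') * M 0 0 = 0 := by rw [ha] at f00; linear_combination f00
    exact (mul_eq_zero.mp this).resolve_left hsub
  have hM01 : M 0 1 = 0 := by
    have : (b - b') * M 0 1 = 0 := by linear_combination f01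
    exact (mul_eq_zero.mp this).resolve_left hsub
  have hM10 : M 1 0 = 0 := by
    have : (b - b') * M 1 0 = 0 := by linear_combination f10
    exact (mul_eq_zero.mp this).resolve_left hsub
  rw [hM00, hM01, hM10] at hdet
  simp at hdet

private lemma det_span' {F : Type*} [Field F]
    (M : Matrix (Fin 2) (Fin 2) F) (htr : M 1 1 = - M 0 0)
    (hdet : M 0 0 * M 0 0 + M 0 1 * M 1 0 = -1) (a b : F) :
    (a • (1 : Matrix (Fin 2) (Fin 2) F) + b • M).det = a^2 + b^2 := by
  rw [Matrix.det_fin_two]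
  simp [Matrix.one_apply, htr]
  linear_combination (-(b*b)) * hdet


open Matrix

private lemma ch2 {F : Type*} [Field F] (M : Matrix (Fin 2) (Fin 2) F) :
    M * M = (M 0 0 + M 1 1) • M - (M.det) • 1 := by
  ext i j
  fin_cases i <;> fin_cases j <;>
    simp [Matrix.mul_apply, Fin.sum_univ_two, Matrix.det_fin_two, Matrix.one_apply] <;> ring

private lemma span_of_commute {F : Type*} [Field F] (h2 : (2:F) ≠ 0)
    (M N : Matrix (Fin 2) (Fin 2) F) (htr : M 1 1 = - M 0 0)
    (hdet : M 0 0 * M 0 0 + M 0 1 * M 1 0 = -1) (hcomm : N * M = M * N) :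
    ∃ a b : F, N = a • 1 + b • M := by
  have e00 := congrFun (congrFun hcomm 0) 0
  have e01 := congrFun (congrFun hcomm 0) 1
  have e10 := congrFun (congrFun hcomm 1) 0
  have e11 := congrFun (congrFun hcomm 1) 1
  simp only [Matrix.mul_apply, Fin.sum_univ_two, htr] at e00 e01 e10 e11
  by_cases hy : M 0 1 ≠ 0
  · refine ⟨N 0 0 - (N 0 1 / M 0 1) * M 0 0, N 0 1 / M 0 1, ?_⟩
    ext i j
    fin_cases i <;> fin_cases j <;>
      simp [Matrix.one_apply, htr] <;> field_simp <;>
      first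
        | ring1
        | linear_combination e00 | linear_combination -e00
        | linear_combination e01 | linear_combination -e01
        | linear_combination 2*e01 | linear_combination -2*e01
        | linear_combination e00 + e01 | linear_combination -e00 - e01
        | linear_combination e00 - e01 | linear_combination e01 - e00
  · push_neg at hy
    by_cases hz : M 1 0 ≠ 0
    · simp only [hy] at e00 e01 e10 e11
      have hN01 : N 0 1 = 0 := by
        rcases mul_eq_zero.mp (show N 0 1 * M 1 0 = 0 by linear_combination e00) with h | h
        · exact h
        · exact absurd h hz
      refine ⟨N 0 0 - (N 1 0 / M 1 0) * M 0 0, N 1 0 / M 1 0, ?_⟩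
      ext i j
      fin_cases i <;> fin_cases j <;>
        simp [Matrix.one_apply, htr, hy, hN01] <;> field_simp <;>
        first
          | ring1
          | linear_combination e10 | linear_combination -e10
          | linear_combination 2*e10 | linear_combination -2*e10
    · push_neg at hz
      have hx : M 0 0 ≠ 0 := by
        intro h
        rw [h, hy] at hdet
        simp at hdet
      simp only [hy, hz] at e01 e10
      have h2x : (2:F) * M 0 0 ≠ 0 := mul_ne_zero h2 hx
      have hN01 : N 0 1 = 0 := by
        rcases mul_eq_zero.mp (show (2 * M 0 0) * N 0 1 = 0 by linear_combination -e01) with h | h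
        · exact absurd h h2x
        · exact h
      have hN10 : N 1 0 = 0 := by
        rcases mul_eq_zero.mp (show (2 * M 0 0) * N 1 0 = 0 by linear_combination e10) with h | h
        · exact absurd h h2x
        · exact h
      refine ⟨(N 0 0 + N 1 1)/2, (N 0 0 - N 1 1)/(2 * M 0 0), ?_⟩
      ext i j
      fin_cases i <;> fin_cases j <;>
        simp [Matrix.one_apply, htr, hy, hz, hN01, hN10] <;> field_simp <;> ring1

/-- Let `q` be an odd prime and `F` a finite field of characteristic `q`.  Then the
centralizer in `SL(2,F)` of any element of order exactly `4` is a cyclic group. -/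
theorem stmt_1 (q : ℕ) (hq : Nat.Prime q) (hodd : Odd q)
    (F : Type*) [Field F] [Fintype F] [CharP F q]
    (X : Matrix.SpecialLinearGroup (Fin 2) F) (hX : orderOf X = 4) :
    IsCyclic (Subgroup.centralizer ({X} : Set (Matrix.SpecialLinearGroup (Fin 2) F))) := by
  classical
  have hq2 : q ≠ 2 := by rintro rfl; rw [Nat.odd_iff] at hodd; omega
  have h2F : (2:F) ≠ 0 := by
    intro h
    have h2 : ((2:ℕ):F) = 0 := by exact_mod_cast h
    have := (CharP.cast_eq_zero_iff F q 2).mp h2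
    exact hq2 ((Nat.prime_dvd_prime_iff_eq hq Nat.prime_two).mp this)
  set M : Matrix (Fin 2) (Fin 2) F := (X : Matrix (Fin 2) (Fin 2) F) with hM
  have hdetM : M.det = 1 := X.2
  -- X^4 = 1 at the matrix level
  have hX4 : X ^ 4 = 1 := by rw [← hX]; exact pow_orderOf_eq_one X
  have hM4 : M ^ 4 = 1 := by
    have := congrArg (fun A : Matrix.SpecialLinearGroup (Fin 2) F => (A : Matrix (Fin 2) (Fin 2) F)) hX4
    simpa [hM] using this
  -- step 1 : M * M = -1
  have hMM : M * M = -1 := by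
    set A := M * M with hA
    have hAA : A * A = 1 := by
      rw [hA, show M * M * (M * M) = M ^ 4 by noncomm_ring]; exact hM4
    have hdetA : A.det = 1 := by rw [hA, Matrix.det_mul, hdetM, one_mul]
    have hch := ch2' A
    rw [hAA, hdetA, one_smul] at hch
    -- 1 = (trA) • A - 1
    have htA : (A 0 0 + A 1 1) • A = (2:F) • (1 : Matrix (Fin 2) (Fin 2) F) := by
      have h11 : (1:Matrix (Fin 2) (Fin 2) F) + 1 = (A 0 0 + A 1 1) • A :=
        eq_sub_iff_add_eq.mp hch
      rw [← h11]; ext i j; fin_cases i <;> fin_cases j <;> simp [Matrix.one_apply] <;> norm_num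
    by_cases ht : A 0 0 + A 1 1 = 0
    · exfalso
      have := congrFun (congrFun htA 0) 0
      simp [ht, Matrix.one_apply] at this
      exact h2F this.symm
    · -- A is scalar
      have hAs : A = (2 / (A 0 0 + A 1 1)) • (1 : Matrix (Fin 2) (Fin 2) F) := by
        have := congrArg (fun B => (A 0 0 + A 1 1)⁻¹ • B) htA
        simpa [smul_smul, inv_mul_cancel₀ ht, div_eq_inv_mul] using this
      set c := 2 / (A 0 0 + A 1 1) with hc
      have hc : c = 1 ∨ c = -1 := by
        have := hdetA
        rw [hAs] at this
        simpa [Matrix.det_fin_two, Matrix.one_apply, mul_self_eq_one_iff] using this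
      rcases hc with h1 | h1
      · exfalso
        have hA1 : A = 1 := by rw [hAs, h1, one_smul]
        have hX2 : X ^ 2 = 1 := by
          apply Subtype.ext
          have : ((X ^ 2 : Matrix.SpecialLinearGroup (Fin 2) F) : Matrix (Fin 2) (Fin 2) F) = M ^ 2 := by simp [hM]
          rw [this]
          simpa [pow_two] using hA1
        have := orderOf_dvd_of_pow_eq_one hX2
        rw [hX] at this
        omega
      · rw [hAs, h1]
        ext i j; fin_cases i <;> fin_cases j <;> simp [Matrix.one_apply]
  -- step 2 : trace of M is 0
  have htr : M 1 1 = - M 0 0 := by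
    have hch := ch2' M
    rw [hMM, hdetM, one_smul] at hch
    have htM : (M 0 0 + M 1 1) • M = 0 := by
      have h' := eq_sub_iff_add_eq.mp hch
      have : (-1 : Matrix (Fin 2) (Fin 2) F) + 1 = 0 := by abel
      rw [this] at h'
      exact h'.symm
    by_cases h : M 0 0 + M 1 1 = 0
    · linear_combination h
    · exfalso
      have hM0 : M = 0 := by
        have := congrArg (fun B => (M 0 0 + M 1 1)⁻¹ • B) htM
        simpa [smul_smul, inv_mul_cancel₀ h] using this
      rw [hM0] at hdetM
      simp at hdetM
  have hdet' : M 0 0 * M 0 0 + M 0 1 * M 1 0 = -1 := by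
    have := hdetM
    rw [Matrix.det_fin_two, htr] at this
    linear_combination -this
  -- the commutant decomposition for centralizer elements
  set C := Subgroup.centralizer ({X} : Set (Matrix.SpecialLinearGroup (Fin 2) F)) with hC
  have hspan : ∀ Y : C, ∃ a b : F, ((Y : Matrix.SpecialLinearGroup (Fin 2) F) : Matrix (Fin 2) (Fin 2) F) = a • 1 + b • M := by
    intro Y
    apply span_of_commute h2F M _ htr hdet'
    have hcomm : X * (Y : Matrix.SpecialLinearGroup (Fin 2) F) = (Y : Matrix.SpecialLinearGroup (Fin 2) F) * X := Subgroup.mem_centralizer_iff.mp Y.2 X rfl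
    have := congrArg (fun A : Matrix.SpecialLinearGroup (Fin 2) F => (A : Matrix (Fin 2) (Fin 2) F)) hcomm
    simpa [hM] using this.symm
  -- coefficients
  choose ga gb hg using hspan
  -- target field
  set K := AlgebraicClosure F with hK
  set φ : F →+* K := algebraMap F K with hφdef
  have hφ : Function.Injective φ := φ.injective
  have h2K : (2:K) ≠ 0 := by
    intro h
    apply h2F
    apply hφ
    rw [map_ofNat, map_zero, h]
  obtain ⟨i, hi⟩ := IsAlgClosed.exists_pow_nat_eq (-1 : K) (n := 2) (by norm_num)
  have hi0 : i ≠ 0 := by intro h; rw [h] at hi; simp at hi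
  -- determinant identity
  have hdetY : ∀ Y : C, (ga Y)^2 + (gb Y)^2 = 1 := by
    intro Y
    have h1 : ((Y : Matrix.SpecialLinearGroup (Fin 2) F) : Matrix (Fin 2) (Fin 2) F).det = 1 := (Y : Matrix.SpecialLinearGroup (Fin 2) F).2
    rw [hg Y, det_span' M htr hdet'] at h1
    exact h1
  -- the monoid hom
  have huniq : ∀ (a b a' b' : F),
      a • (1 : Matrix (Fin 2) (Fin 2) F) + b • M = a' • 1 + b' • M → a = a' ∧ b = b' :=
    fun a b a' b' h => span_uniq' h2F M htr hdet' a b a' b' h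
  let f : C →* K :=
  { toFun := fun Y => φ (ga Y) + φ (gb Y) * i
    map_one' := by
      have h1 : (((1 : C) : Matrix.SpecialLinearGroup (Fin 2) F) : Matrix (Fin 2) (Fin 2) F)
          = (1:F) • 1 + (0:F) • M := by simp
      obtain ⟨ha, hb⟩ := huniq _ _ _ _ ((hg 1).symm.trans h1)
      simp [ha, hb]
    map_mul' := by
      intro Y Z
      have hprod : (((Y * Z : C) : Matrix.SpecialLinearGroup (Fin 2) F) : Matrix (Fin 2) (Fin 2) F)
          = (ga Y * ga Z - gb Y * gb Z) • 1
            + (ga Y * gb Z + gb Y * ga Z) • M := by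
        have hcoe : (((Y * Z : C) : Matrix.SpecialLinearGroup (Fin 2) F) : Matrix (Fin 2) (Fin 2) F)
            = ((Y : Matrix.SpecialLinearGroup (Fin 2) F) : Matrix (Fin 2) (Fin 2) F) * ((Z : Matrix.SpecialLinearGroup (Fin 2) F) : Matrix (Fin 2) (Fin 2) F) := by
          simp
        rw [hcoe, hg Y, hg Z]
        rw [add_mul, mul_add, mul_add, smul_mul_assoc, smul_mul_assoc, smul_mul_assoc,
          smul_mul_assoc, mul_smul_comm, mul_smul_comm, mul_smul_comm, mul_smul_comm, hMM]
        ext a b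
        fin_cases a <;> fin_cases b <;> simp [Matrix.one_apply] <;> ring
      obtain ⟨ha, hb⟩ := huniq _ _ _ _ ((hg (Y * Z)).symm.trans hprod)
      show φ (ga (Y * Z)) + φ (gb (Y * Z)) * i
          = (φ (ga Y) + φ (gb Y) * i) * (φ (ga Z) + φ (gb Z) * i)
      rw [ha, hb]
      simp only [map_add, map_sub, _root_.map_mul]
      linear_combination (-(φ (gb Y) * φ (gb Z))) * hi
    }
  have hfval : ∀ Y : C, f Y = φ (ga Y) + φ (gb Y) * i := fun _ => rfl
  -- injectivity
  have hfinv : ∀ Y : C, f Y * (φ (ga Y) - φ (gb Y) * i) = 1 := by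
    intro Y
    have := congrArg φ (hdetY Y)
    simp only [map_add, map_pow, _root_.map_one] at this
    rw [hfval Y]
    linear_combination this - (φ (gb Y))^2 * hi
  have hinj : Function.Injective f := by
    intro Y Z h
    have hne : f Y ≠ 0 := left_ne_zero_of_mul_eq_one (hfinv Y)
    have hvv : φ (ga Y) - φ (gb Y) * i = φ (ga Z) - φ (gb Z) * i := by
      apply mul_left_cancel₀ hne
      rw [hfinv Y, h, hfinv Z]
    have h1 : φ (ga Y) + φ (gb Y) * i = φ (ga Z) + φ (gb Z) * i := by
      rw [← hfval Y, ← hfval Z, h]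
    have ha : ga Y = ga Z := by
      apply hφ
      have : (2:K) * φ (ga Y) = (2:K) * φ (ga Z) := by linear_combination h1 + hvv
      exact mul_left_cancel₀ h2K this
    have hb : gb Y = gb Z := by
      apply hφ
      have h2i : (2:K) * i ≠ 0 := mul_ne_zero h2K hi0
      have : ((2:K) * i) * φ (gb Y) = ((2:K) * i) * φ (gb Z) := by
        linear_combination h1 - hvv
      exact mul_left_cancel₀ h2i this
    have hmat : ((Y : Matrix.SpecialLinearGroup (Fin 2) F) : Matrix (Fin 2) (Fin 2) F) = ((Z : Matrix.SpecialLinearGroup (Fin 2) F) : Matrix (Fin 2) (Fin 2) F) := by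
      rw [hg Y, hg Z, ha, hb]
    exact Subtype.ext (Subtype.ext hmat)
  have hfin : Finite (Matrix.SpecialLinearGroup (Fin 2) F) := by
    exact Finite.of_injective (fun A : Matrix.SpecialLinearGroup (Fin 2) F => (A : Matrix (Fin 2) (Fin 2) F))
      (fun _ _ h => Subtype.ext h)
  exact isCyclic_of_subgroup_isDomain f hinj
end

section
/- Let q be an odd prime and let F be a finite field of characteristic q. If Q is a subgroup of SL(2,F) isomorphic to the quaternion group of order 8, then the centralizer of Q in SL(2,F) is contained in Q. -/
/-!
Let `g, h ∈ Q` be elements with `orderOf g = 4` and `h g h⁻¹ = g⁻¹`. In characteristic `≠ 2` the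
only involution of `SL(2, F)` is `-1`, so `g² = -1` and hence `g h = -h g`. An element commuting
with the non-scalar matrix `g` is of the form `α + β g`; commuting also with `h` forces `β = 0`.
So the centralizer consists of scalar matrices of determinant `1`, namely `1` and `-1 = g²`.
-/

open Matrix
open scoped MatrixGroups

theorem eq_zero_of_eq_neg_of_two_ne_zero {K M : Type*} [DivisionRing K] [AddCommGroup M]
    [Module K M] (h2 : (2 : K) ≠ 0) {x : M} (h : x = -x) : x = 0 := by
  have h2x : (2 : K) • x = 0 := by
    rw [two_smul]
    nth_rewrite 2 [h]
    exact add_neg_cancel x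
  exact (smul_eq_zero.mp h2x).resolve_left h2

namespace Matrix

variable {F : Type*} [Field F]

theorem exists_eq_scalar_add_smul_of_commute {A X : Matrix (Fin 2) (Fin 2) F}
    (hA : A ∉ Set.range (scalar (Fin 2))) (hXA : Commute X A) :
    ∃ α β : F, X = scalar (Fin 2) α + β • A := by
  have e00 := congrFun₂ hXA.eq 0 0
  have e01 := congrFun₂ hXA.eq 0 1
  have e10 := congrFun₂ hXA.eq 1 0
  simp only [mul_apply, Fin.sum_univ_two] at e00 e01 e10
  -- the entries of `X * A - A * X` are the `2 × 2` minors of the two vectors of length 3 below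
  obtain ⟨β, h01, h10, hdiag⟩ : ∃ β : F, X 0 1 = β * A 0 1 ∧ X 1 0 = β * A 1 0 ∧
      X 0 0 - X 1 1 = β * (A 0 0 - A 1 1) := by
    by_cases hb : A 0 1 = 0
    · by_cases hc : A 1 0 = 0
      · have hd : A 0 0 - A 1 1 ≠ 0 := by
          refine fun hd ↦ hA ⟨A 0 0, ?_⟩
          ext i j
          fin_cases i <;> fin_cases j <;> simp [hb, hc, sub_eq_zero.mp hd]
        refine ⟨(X 0 0 - X 1 1) / (A 0 0 - A 1 1), ?_, ?_, by field_simp⟩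
        · rw [hb, mul_zero]
          exact mul_right_cancel₀ hd (by linear_combination -e01 + (X 0 0 - X 1 1) * hb)
        · rw [hc, mul_zero]
          exact mul_right_cancel₀ hd (by linear_combination e10 + (X 0 0 - X 1 1) * hc)
      · refine ⟨X 1 0 / A 1 0, ?_, by field_simp, ?_⟩
        · rw [hb, mul_zero]
          exact mul_right_cancel₀ hc (by linear_combination e00 + X 1 0 * hb)
        · field_simp
          linear_combination -e10
    · refine ⟨X 0 1 / A 0 1, by field_simp, ?_, ?_⟩
      · field_simp
        linear_combination -e00
      · field_simp
        linear_combination e01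
  refine ⟨X 0 0 - β * A 0 0, β, ?_⟩
  ext i j
  fin_cases i <;> fin_cases j
  · simp
  · simp [h01]
  · simp [h10]
  · simp
    linear_combination -hdiag

theorem mem_range_scalar_of_commute_of_anticommute (h2 : (2 : F) ≠ 0)
    {A B X : Matrix (Fin 2) (Fin 2) F} (hAB : A * B = -(B * A)) (hAB0 : A * B ≠ 0)
    (hXA : Commute X A) (hXB : Commute X B) : X ∈ Set.range (scalar (Fin 2)) := by
  have hA : A ∉ Set.range (scalar (Fin 2)) := by
    rintro ⟨c, rfl⟩
    refine hAB0 (eq_zero_of_eq_neg_of_two_ne_zero h2 ?_)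
    simpa only [(scalar_commute c (Commute.all c) B).eq] using hAB
  obtain ⟨α, β, rfl⟩ := exists_eq_scalar_add_smul_of_commute hA hXA
  have hβAB : β • (A * B) = -(β • (A * B)) := by
    have := hXB.eq
    rw [add_mul, mul_add, (scalar_commute α (Commute.all α) B).eq, smul_mul_assoc,
      mul_smul_comm, add_left_cancel_iff] at this
    conv_rhs => rw [hAB, smul_neg, neg_neg]
    exact this
  have hβ : β = 0 :=
    (smul_eq_zero.mp (eq_zero_of_eq_neg_of_two_ne_zero h2 hβAB)).resolve_right hAB0
  exact ⟨α, by simp [hβ]⟩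

end Matrix

namespace Matrix.SpecialLinearGroup

variable {F : Type*} [Field F]

theorem eq_one_or_eq_neg_one_of_coe_eq_scalar {g : SL(2, F)} {c : F}
    (hg : (g : Matrix (Fin 2) (Fin 2) F) = scalar (Fin 2) c) : g = 1 ∨ g = -1 := by
  have hc : c ^ 2 = 1 := by simpa [hg] using g.det_coe
  rcases sq_eq_one_iff.mp hc with rfl | rfl
  · exact .inl (Subtype.ext <| by simpa using hg)
  · exact .inr (Subtype.ext <| by rw [hg, coe_neg, coe_one, map_neg, map_one])

theorem eq_one_or_eq_neg_one_of_sq_eq_one (h2 : (2 : F) ≠ 0) {g : SL(2, F)} (hg : g ^ 2 = 1) :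
    g = 1 ∨ g = -1 := by
  have hadj : adjugate (g : Matrix (Fin 2) (Fin 2) F) = g := by
    rw [← coe_inv, inv_eq_of_mul_eq_one_right (by rw [← sq, hg])]
  rw [adjugate_fin_two] at hadj
  have h01 : g 0 1 = 0 :=
    eq_zero_of_eq_neg_of_two_ne_zero h2 (by simpa using (congrFun₂ hadj 0 1).symm)
  have h10 : g 1 0 = 0 :=
    eq_zero_of_eq_neg_of_two_ne_zero h2 (by simpa using (congrFun₂ hadj 1 0).symm)
  have h11 : g 1 1 = g 0 0 := by simpa using congrFun₂ hadj 0 0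
  refine eq_one_or_eq_neg_one_of_coe_eq_scalar (c := g 0 0) ?_
  ext i j
  fin_cases i <;> fin_cases j <;> simp [h01, h10, h11]

theorem eq_one_or_eq_sq_of_commute_of_conj_eq_inv (h2 : (2 : F) ≠ 0) {g h x : SL(2, F)}
    (hg : orderOf g = 4) (hhg : h * g * h⁻¹ = g⁻¹) (hxg : Commute x g) (hxh : Commute x h) :
    x = 1 ∨ x = g ^ 2 := by
  have hg4 : (g ^ 2) ^ 2 = 1 := by
    rw [← pow_mul, show 2 * 2 = orderOf g by omega, pow_orderOf_eq_one]
  have hg2 : g ^ 2 = -1 := (eq_one_or_eq_neg_one_of_sq_eq_one h2 hg4).resolve_left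
    (pow_ne_one_of_lt_orderOf two_ne_zero (by omega))
  have hginv : g⁻¹ = -g := inv_eq_of_mul_eq_one_right (by rw [mul_neg, ← sq, hg2, neg_neg])
  have hanti : g * h = -(h * g) := by
    rw [mul_inv_eq_iff_eq_mul.mp hhg, hginv, neg_mul, neg_neg]
  obtain ⟨c, hc⟩ := Matrix.mem_range_scalar_of_commute_of_anticommute h2
    (congrArg coeMonoidHom hanti) (fun h0 ↦ by simpa [h0] using (g * h).det_coe)
    (hxg.map coeMonoidHom) (hxh.map coeMonoidHom)
  rw [hg2]
  exact eq_one_or_eq_neg_one_of_coe_eq_scalar hc.symm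

end Matrix.SpecialLinearGroup

theorem QuaternionGroup.xa_mul_a_mul_xa_inv {n : ℕ} (i j : ZMod (2 * n)) :
    xa i * a j * (xa i)⁻¹ = (a j)⁻¹ := by
  rw [mul_inv_eq_iff_eq_mul, eq_inv_mul_iff_mul_eq]
  simp

theorem QuaternionGroup.exists_orderOf_eq_and_mul_mul_inv_eq_inv {G : Type*} [Group G] {n : ℕ}
    (e : G ≃* QuaternionGroup n) : ∃ g h : G, orderOf g = 2 * n ∧ h * g * h⁻¹ = g⁻¹ :=
  ⟨e.symm (a 1), e.symm (xa 0), by rw [MulEquiv.orderOf_eq, orderOf_a_one], by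
    rw [← map_inv, ← map_inv, ← map_mul, ← map_mul, xa_mul_a_mul_xa_inv]⟩

theorem stmt_3_general (q : ℕ) (hodd : Odd q)
    (F : Type*) [Field F] [CharP F q]
    (Q : Subgroup (Matrix.SpecialLinearGroup (Fin 2) F))
    (hQ : Nonempty (Q ≃* QuaternionGroup 2)) :
    Subgroup.centralizer (Q : Set (Matrix.SpecialLinearGroup (Fin 2) F)) ≤ Q := by
  have h2 : (2 : F) ≠ 0 := Ring.two_ne_zero <| by
    rw [ringChar.eq F q]
    rintro rfl
    exact Nat.not_odd_iff_even.mpr even_two hodd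
  obtain ⟨e⟩ := hQ
  obtain ⟨g, h, hg, hhg⟩ := QuaternionGroup.exists_orderOf_eq_and_mul_mul_inv_eq_inv e
  intro x hx
  rcases SpecialLinearGroup.eq_one_or_eq_sq_of_commute_of_conj_eq_inv h2
      (g := g) (h := h) (by rw [Subgroup.orderOf_coe, hg]) (by exact_mod_cast hhg)
      (hx g g.2).symm (hx h h.2).symm with rfl | rfl
  · exact Q.one_mem
  · exact pow_mem g.2 2

/-- Let `q` be an odd prime and `F` a finite field of characteristic `q`.  If `Q` is a
subgroup of `SL(2,F)` isomorphic to the quaternion group of order `8`, then the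
centralizer of `Q` in `SL(2,F)` is contained in `Q`. -/
theorem stmt_3 (q : ℕ) (hq : Nat.Prime q) (hodd : Odd q)
    (F : Type*) [Field F] [Fintype F] [CharP F q]
    (Q : Subgroup (Matrix.SpecialLinearGroup (Fin 2) F))
    (hQ : Nonempty (Q ≃* QuaternionGroup 2)) :
    Subgroup.centralizer (Q : Set (Matrix.SpecialLinearGroup (Fin 2) F)) ≤ Q :=
  stmt_3_general q hodd F Q hQ
end

section
/- Let q be an odd prime and let K be an algebraic closure of the field with q elements. Then any subgroup Q of SL(2,K) isomorphic to the quaternion group of order 8 contains its own centralizer in SL(2,K). -/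
/-!
In characteristic not `2` the only involution of `SL(2, K)` is `-1`, so the images `x, y` of the
generators of `Q` satisfy `x * x = -1` and `y * x = -(x * y)`. Then `1, x, y, x * y` are linearly
independent (commutation with `x` kills `1, x` and doubles `y, x * y`), so they span the
four-dimensional algebra of `2 × 2` matrices. An element centralizing `Q` therefore commutes with
every matrix, hence is a scalar of determinant `1`, that is `1` or `-1 = x * x`, both in `Q`.
-/

open Matrix
open scoped MatrixGroups

section Anticommuting

variable {K A : Type*} [Field K] [Ring A] [Algebra K A]

theorem linearIndependent_one_of_anticommute (h2 : (2 : K) ≠ 0) {a b : A}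
    (hab : b * a = -(a * b)) (hab₀ : a * b ≠ 0) : LinearIndependent K ![1, a] := by
  have : Nontrivial A := nontrivial_of_ne _ _ hab₀
  refine LinearIndependent.pair_iff.mpr fun s t hst => ?_
  have h2t : (2 * t) • (a * b) = 0 := by
    have hl : b * (s • 1 + t • a) = 0 := by rw [hst, mul_zero]
    have hr : (s • 1 + t • a) * b = 0 := by rw [hst, zero_mul]
    simp only [mul_add, add_mul, mul_smul_comm, smul_mul_assoc, mul_one, one_mul, hab] at hl hr
    linear_combination (norm := module) hr - hl
  have ht : t = 0 := by simpa [h2, hab₀] using h2t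
  subst ht
  simpa using hst

theorem linearIndependent_quaternion_of_anticommute [Nontrivial A] (h2 : (2 : K) ≠ 0) {a b : A}
    (ha : a * a = -1) (hb : IsUnit b) (hab : b * a = -(a * b)) :
    LinearIndependent K ![1, a, b, a * b] := by
  have haab : a * (a * b) = -b := by rw [← mul_assoc, ha, neg_one_mul]
  have haba : a * b * a = b := by rw [mul_assoc, hab, mul_neg, haab, neg_neg]
  have hindep := linearIndependent_one_of_anticommute h2 hab fun h => hb.ne_zero <| by
    rw [← neg_eq_zero, ← haab, h, mul_zero]
  refine Fintype.linearIndependent_iff.mpr fun c hc => ?_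
  simp only [Fin.sum_univ_four, cons_val_zero, cons_val_one, head_cons, cons_val_two, tail_cons,
    cons_val_three] at hc
  have hcomm : (2 : K) • (((-c 3) • 1 + c 2 • a) * b) = 0 := by
    have hl : a * (c 0 • 1 + c 1 • a + c 2 • b + c 3 • (a * b)) = 0 := by rw [hc, mul_zero]
    have hr : (c 0 • 1 + c 1 • a + c 2 • b + c 3 • (a * b)) * a = 0 := by rw [hc, zero_mul]
    simp only [mul_add, add_mul, mul_smul_comm, smul_mul_assoc, mul_one, one_mul, hab, haab,
      haba] at hl hr ⊢
    linear_combination (norm := module) hl - hr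
  rw [smul_eq_zero, hb.mul_left_eq_zero, or_iff_right h2] at hcomm
  obtain ⟨hc3, hc2⟩ := LinearIndependent.pair_iff.mp hindep _ _ hcomm
  rw [neg_eq_zero] at hc3
  rw [hc2, hc3, zero_smul, zero_smul, add_zero, add_zero] at hc
  obtain ⟨hc0, hc1⟩ := LinearIndependent.pair_iff.mp hindep _ _ hc
  intro i
  fin_cases i <;> assumption

theorem adjoin_eq_top_of_anticommute [FiniteDimensional K A] (hA : Module.finrank K A = 4)
    (h2 : (2 : K) ≠ 0) {a b : A} (ha : a * a = -1) (hb : IsUnit b) (hab : b * a = -(a * b)) :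
    Algebra.adjoin K {a, b} = ⊤ := by
  have : Nontrivial A := Module.nontrivial_of_finrank_eq_succ hA
  have hspan := (linearIndependent_quaternion_of_anticommute h2 ha hb hab
    ).span_eq_top_of_card_eq_finrank (by simp [hA])
  refine eq_top_iff.mpr fun x _ => ?_
  suffices Submodule.span K (Set.range ![1, a, b, a * b]) ≤ Subalgebra.toSubmodule
      (Algebra.adjoin K {a, b}) from this (hspan ▸ Submodule.mem_top)
  rw [Submodule.span_le]
  rintro _ ⟨i, rfl⟩
  have hmem : a ∈ Algebra.adjoin K {a, b} ∧ b ∈ Algebra.adjoin K {a, b} :=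
    ⟨Algebra.subset_adjoin (by simp), Algebra.subset_adjoin (by simp)⟩
  fin_cases i
  exacts [Subalgebra.one_mem _, hmem.1, hmem.2, Subalgebra.mul_mem _ hmem.1 hmem.2]

theorem commute_of_commute_of_anticommute [FiniteDimensional K A] (hA : Module.finrank K A = 4)
    (h2 : (2 : K) ≠ 0) {a b g : A} (ha : a * a = -1) (hb : IsUnit b) (hab : b * a = -(a * b))
    (hga : Commute g a) (hgb : Commute g b) (x : A) : Commute g x := by
  have hle : Algebra.adjoin K {a, b} ≤ Subalgebra.centralizer K {g} := by
    refine Algebra.adjoin_le ?_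
    simp only [Set.insert_subset_iff, Set.singleton_subset_iff, SetLike.mem_coe,
      Subalgebra.mem_centralizer_iff, Set.mem_singleton_iff, forall_eq]
    exact ⟨hga, hgb⟩
  have hx : x ∈ Algebra.adjoin K {a, b} := adjoin_eq_top_of_anticommute hA h2 ha hb hab ▸ trivial
  exact (Subalgebra.mem_centralizer_iff K).mp (hle hx) g rfl

end Anticommuting

namespace Matrix

variable {K : Type*} [Field K]

theorem mem_range_scalar_of_commute_of_anticommute_s4 (h2 : (2 : K) ≠ 0)
    {a b g : Matrix (Fin 2) (Fin 2) K} (ha : a * a = -1) (hb : IsUnit b)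
    (hab : b * a = -(a * b)) (hga : Commute g a) (hgb : Commute g b) :
    g ∈ Set.range (scalar (Fin 2)) :=
  mem_range_scalar_iff_commute_single'.mpr fun _ _ => (commute_of_commute_of_anticommute
    (by simp [Module.finrank_matrix]) h2 ha hb hab hga hgb _).symm

namespace SpecialLinearGroup

theorem eq_one_or_eq_neg_one_of_mem_range_scalar {g : SL(2, K)}
    (hg : (g : Matrix (Fin 2) (Fin 2) K) ∈ Set.range (scalar (Fin 2))) : g = 1 ∨ g = -1 := by
  obtain ⟨c, hc⟩ := hg
  have hc1 : c = 1 ∨ c = -1 := by simpa [← hc, det_fin_two] using g.det_coe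
  rcases hc1 with rfl | rfl
  · exact .inl (Subtype.ext (by rw [← hc, map_one, coe_one]))
  · exact .inr (Subtype.ext (by rw [← hc, map_neg, map_one, coe_neg, coe_one]))

theorem eq_neg_one_of_mul_self_eq_one (h2 : (2 : K) ≠ 0) {g : SL(2, K)} (hg : g * g = 1)
    (hne : g ≠ 1) : g = -1 := by
  have hinv := congrArg (fun m : SL(2, K) => (m : Matrix (Fin 2) (Fin 2) K))
    (inv_eq_of_mul_eq_one_right hg)
  simp only [SL2_inv_expl] at hinv
  have h00 := congrFun (congrFun hinv 1) 1
  have h01 := congrFun (congrFun hinv 0) 1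
  have h10 := congrFun (congrFun hinv 1) 0
  simp only [cons_val_zero, cons_val_one] at h00 h01 h10
  have h01 : (2 : K) * g 0 1 = 0 := by linear_combination -h01
  have h10 : (2 : K) * g 1 0 = 0 := by linear_combination -h10
  refine (eq_one_or_eq_neg_one_of_mem_range_scalar ⟨g 0 0, ?_⟩).resolve_left hne
  ext i j
  fin_cases i <;> fin_cases j <;>
    simp [(mul_eq_zero.mp h01).resolve_left h2, (mul_eq_zero.mp h10).resolve_left h2, h00]

theorem centralizer_le_of_mulEquiv_quaternionGroup (h2 : (2 : K) ≠ 0) {Q : Subgroup SL(2, K)}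
    (e : Q ≃* QuaternionGroup 2) : Subgroup.centralizer (Q : Set SL(2, K)) ≤ Q := by
  let φ : QuaternionGroup 2 →* SL(2, K) := Q.subtype.comp e.symm.toMonoidHom
  have hφQ (r : QuaternionGroup 2) : φ r ∈ Q := (e.symm r).prop
  have hφ : Function.Injective φ := Q.subtype_injective.comp e.symm.injective
  have hz : φ (.a 2) = -1 := by
    refine eq_neg_one_of_mul_self_eq_one h2 ?_ ?_
    · rw [← map_mul, show (QuaternionGroup.a 2 : QuaternionGroup 2) * .a 2 = 1 by decide, map_one]
    · rw [← map_one φ, hφ.ne_iff]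
      decide
  set x := φ (.a 1)
  set y := φ (.xa 0)
  have hxx : x * x = -1 := by
    rw [← hz, ← map_mul]
    rfl
  have hyx : y * x = -(x * y) := by
    rw [← neg_one_mul, ← hz, ← map_mul, ← map_mul, ← map_mul]
    rfl
  intro g hg
  have hgQ (r : SL(2, K)) (hr : r ∈ Q) : Commute (g : Matrix (Fin 2) (Fin 2) K) r :=
    Commute.map (Subgroup.mem_centralizer_iff.mp hg r hr).symm coeMonoidHom
  have hscalar := mem_range_scalar_of_commute_of_anticommute_s4 h2 (a := x) (b := y)
    (by simpa using congrArg coeMonoidHom hxx) ((Group.isUnit y).map coeMonoidHom)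
    (by simpa using congrArg coeMonoidHom hyx) (hgQ x (hφQ _)) (hgQ y (hφQ _))
  rcases eq_one_or_eq_neg_one_of_mem_range_scalar hscalar with rfl | rfl
  · exact Q.one_mem
  · exact hz ▸ hφQ _

end SpecialLinearGroup

end Matrix

theorem stmt_4_general (q : ℕ) [Fact (Nat.Prime q)] (hodd : Odd q)
    (K : Type*) [Field K] [Algebra (ZMod q) K]
    (Q : Subgroup (Matrix.SpecialLinearGroup (Fin 2) K))
    (hQ : Nonempty (Q ≃* QuaternionGroup 2)) :
    Subgroup.centralizer (Q : Set (Matrix.SpecialLinearGroup (Fin 2) K)) ≤ Q := by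
  have hchar : ringChar K ≠ 2 := by
    rw [← Algebra.ringChar_eq (ZMod q) K, ZMod.ringChar_zmod_n]
    rintro rfl
    exact Nat.not_even_iff_odd.mpr hodd even_two
  exact Matrix.SpecialLinearGroup.centralizer_le_of_mulEquiv_quaternionGroup
    (Ring.two_ne_zero hchar) hQ.some

/-- Let `q` be an odd prime and `K` an algebraic closure of the field with `q` elements.
Then any subgroup `Q` of `SL(2,K)` isomorphic to the quaternion group of order `8`
contains its own centralizer in `SL(2,K)`. -/
theorem stmt_4 (q : ℕ) [Fact (Nat.Prime q)] (hodd : Odd q)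
    (K : Type*) [Field K] [Algebra (ZMod q) K] [IsAlgClosure (ZMod q) K]
    (Q : Subgroup (Matrix.SpecialLinearGroup (Fin 2) K))
    (hQ : Nonempty (Q ≃* QuaternionGroup 2)) :
    Subgroup.centralizer (Q : Set (Matrix.SpecialLinearGroup (Fin 2) K)) ≤ Q :=
  stmt_4_general q hodd K Q hQ
end

section
/- Let p be a prime, let S be a finite p-group, let A and B be subgroups of S, and let f: A -> B be an isomorphism. Let Gamma be the HNN extension of S along f, i.e. the group generated by S together with a stable letter t subject to the relations of S and t a t^{-1} = f(a) for all a in A. Then the image of S under the canonical homomorphism S -> Gamma is a Sylow p-subgroup of Gamma, in the sense that every finite p-subgroup of Gamma is conjugate in Gamma to a subgroup of the image of S. -/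
namespace HNNSylowAux

open HNNExtension HNNExtension.NormalWord Multiplicative

variable {G : Type*} [Group G] {A B : Subgroup G} {φ : A ≃* B}
  (d : TransversalPair G A B)

/-- the length (number of `t`-letters) of the normal form of `g`. -/
noncomputable def hlen (g : HNNExtension G A B φ) : ℕ :=
  ((g • (empty : NormalWord d)).toList).length

theorem hlen_def (g : HNNExtension G A B φ) :
    hlen d g = ((g • (empty : NormalWord d)).toList).length := rfl

theorem prod_theta (g : HNNExtension G A B φ) :
    ((g • (empty : NormalWord d)).prod φ) = g := by
  rw [prod_smul, prod_empty, mul_one]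

theorem hlen_prod (w : NormalWord d) : hlen d (w.prod φ) = w.toList.length := by
  rw [hlen_def, prod_smul_empty]

theorem hlen_of (s : G) : hlen d (of s : HNNExtension G A B φ) = 0 := by
  rw [hlen_def, of_smul_eq_smul, group_smul_toList]
  rfl

theorem hlen_one : hlen d (1 : HNNExtension G A B φ) = 0 := by
  simpa using hlen_of d (1 : G)

theorem hlen_of_mul (s : G) (g : HNNExtension G A B φ) :
    hlen d (of s * g) = hlen d g := by
  rw [hlen_def, mul_smul, of_smul_eq_smul, group_smul_toList, hlen_def]

theorem mem_range_of_hlen_eq_zero {g : HNNExtension G A B φ} (h : hlen d g = 0) :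
    g ∈ (of : G →* HNNExtension G A B φ).range := by
  rw [hlen_def, List.length_eq_zero_iff] at h
  refine ⟨(g • (empty : NormalWord d)).head, ?_⟩
  conv_rhs => rw [← prod_theta d g]
  simp [ReducedWord.prod, h]

theorem length_unitsSMul_of_not_cancels {u : ℤˣ} {w : NormalWord d}
    (h : ¬ Cancels u w) :
    (unitsSMul φ u w).toList.length = w.toList.length + 1 := by
  rw [unitsSMul, dif_neg h]
  simp

theorem head_unitsSMul_mem_of_not_cancels {u : ℤˣ} {w : NormalWord d}
    (h : ¬ Cancels u w) :
    (unitsSMul φ u w).head ∈ (toSubgroup A B (-u) : Subgroup G) := by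
  rw [unitsSMul, dif_neg h]
  simp only [cons_head, unitsSMulGroup]
  exact SetLike.coe_mem _

theorem head?_unitsSMul_of_not_cancels {u : ℤˣ} {w : NormalWord d}
    (h : ¬ Cancels u w) :
    (unitsSMul φ u w).toList.head?.map Prod.fst = some u := by
  rw [unitsSMul, dif_neg h]
  simp

theorem length_unitsSMul_of_cancels {u : ℤˣ} {w : NormalWord d}
    (h : Cancels u w) :
    (unitsSMul φ u w).toList.length + 1 = w.toList.length := by
  rw [unitsSMul, dif_pos h]
  induction w using consRecOn with
  | ofGroup g => simp [Cancels, ofGroup] at h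
  | cons g u' w h1 h2 _ =>
    simp [unitsSMulWithCancel]

theorem hlen_tpow_mul_le (u : ℤˣ) (g : HNNExtension G A B φ) :
    hlen d (t ^ (u : ℤ) * g) ≤ hlen d g + 1 := by
  rw [hlen_def, mul_smul, t_pow_smul_eq_unitsSMul, hlen_def]
  by_cases h : Cancels u (g • (empty : NormalWord d))
  · have := length_unitsSMul_of_cancels (φ := φ) d h
    omega
  · have := length_unitsSMul_of_not_cancels (φ := φ) d h
    omega

theorem hlen_tpow (u : ℤˣ) :
    hlen d (t ^ (u : ℤ) : HNNExtension G A B φ) = 1 := by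
  have h : ¬ Cancels u (empty : NormalWord d) := by
    simp [Cancels, empty]
  have := length_unitsSMul_of_not_cancels (φ := φ) d h
  rw [hlen_def, t_pow_smul_eq_unitsSMul, this]
  rfl

theorem prod_ofGroup (g : G) :
    ((ofGroup g : NormalWord d)).prod φ = of g := by
  simp [ReducedWord.prod, ofGroup]

theorem hlen_prod_mul_le (w : NormalWord d) (x : HNNExtension G A B φ) :
    hlen d (w.prod φ * x) ≤ w.toList.length + hlen d x := by
  induction w using consRecOn generalizing x with
  | ofGroup g' =>
    rw [prod_ofGroup, hlen_of_mul]
    simp [ofGroup]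
  | cons g' u w h1 h2 ih =>
    rw [prod_cons]
    have e : of g' * (t ^ (u : ℤ) * w.prod φ) * x
        = of g' * (t ^ (u : ℤ) * (w.prod φ * x)) := by group
    rw [e, hlen_of_mul]
    calc hlen d (t ^ (u : ℤ) * (w.prod φ * x)) ≤ hlen d (w.prod φ * x) + 1 :=
          hlen_tpow_mul_le d u _
      _ ≤ w.toList.length + hlen d x + 1 := by have := ih x; omega
      _ = (cons g' u w h1 h2).toList.length + hlen d x := by simp; omega

theorem hlen_mul_le (g h : HNNExtension G A B φ) :
    hlen d (g * h) ≤ hlen d g + hlen d h := by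
  have := hlen_prod_mul_le d (g • (empty : NormalWord d)) h
  rwa [prod_theta] at this

theorem hlen_mul_of (g : HNNExtension G A B φ) (s : G) :
    hlen d (g * of s) = hlen d g := by
  refine le_antisymm ?_ ?_
  · have := hlen_mul_le d g (of s)
    rwa [hlen_of, add_zero] at this
  · have := hlen_mul_le d (g * of s) (of s⁻¹)
    rw [hlen_of, add_zero, mul_assoc, ← map_mul] at this
    simpa using this

theorem hlen_inv (g : HNNExtension G A B φ) : hlen d g⁻¹ = hlen d g := by
  have key : ∀ w : NormalWord d, hlen d ((w.prod φ)⁻¹) ≤ w.toList.length := by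
    intro w
    induction w using consRecOn with
    | ofGroup g' =>
      rw [prod_ofGroup, ← map_inv, hlen_of]
      simp [ofGroup]
    | cons g' u w h1 h2 ih =>
      rw [prod_cons]
      have e : (of g' * (t ^ (u : ℤ) * w.prod φ))⁻¹
          = (w.prod φ)⁻¹ * (t ^ (-(u : ℤ)) * of g'⁻¹) := by
        rw [map_inv, zpow_neg]
        group
      rw [e]
      calc hlen d ((w.prod φ)⁻¹ * (t ^ (-(u : ℤ)) * of g'⁻¹))
          ≤ hlen d ((w.prod φ)⁻¹) + hlen d (t ^ (-(u : ℤ)) * of g'⁻¹) :=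
            hlen_mul_le d _ _
        _ ≤ w.toList.length + (hlen d (of g'⁻¹ : HNNExtension G A B φ) + 1) := by
            have h1' : hlen d (t ^ (-(u : ℤ)) * (of g'⁻¹ : HNNExtension G A B φ))
                ≤ hlen d (of g'⁻¹ : HNNExtension G A B φ) + 1 := by
              have := hlen_tpow_mul_le d (-u) (of g'⁻¹ : HNNExtension G A B φ)
              rwa [Units.val_neg] at this
            have := ih
            omega
        _ ≤ (cons g' u w h1 h2).toList.length := by rw [hlen_of]; simp
  have h1 : ∀ x : HNNExtension G A B φ, hlen d x⁻¹ ≤ hlen d x := by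
    intro x
    have := key (x • (empty : NormalWord d))
    rwa [prod_theta, ← hlen_def] at this
  refine le_antisymm (h1 g) ?_
  have := h1 g⁻¹
  rwa [inv_inv] at this

variable (φ) in
/-- the homomorphism counting the signed number of `t`-letters. -/
noncomputable def piZ : HNNExtension G A B φ →* Multiplicative ℤ :=
  lift 1 (ofAdd 1) (by intro a; simp)

@[simp] theorem piZ_of (s : G) : piZ φ (of s) = 1 := by
  simp [piZ]

@[simp] theorem piZ_t : piZ φ (t : HNNExtension G A B φ) = ofAdd 1 := by
  simp [piZ]

theorem units_cast_zmod (u : ℤˣ) : (((u : ℤ) : ZMod 2)) = 1 := by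
  rcases Int.units_eq_one_or u with rfl | rfl <;> decide

theorem hlen_parity (g : HNNExtension G A B φ) :
    ((hlen d g : ZMod 2)) = ((toAdd (piZ φ g) : ℤ) : ZMod 2) := by
  have key : ∀ w : NormalWord d,
      ((w.toList.length : ZMod 2)) = ((toAdd (piZ φ (w.prod φ)) : ℤ) : ZMod 2) := by
    intro w
    induction w using consRecOn with
    | ofGroup g' => rw [prod_ofGroup]; simp [ofGroup]
    | cons g' u w h1 h2 ih =>
      rw [prod_cons]
      have : toAdd (piZ φ (of g' * (t ^ (u : ℤ) * w.prod φ)))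
          = (u : ℤ) + toAdd (piZ φ (w.prod φ)) := by
        simp [toAdd_zpow]
      rw [this]
      have hu := units_cast_zmod u
      push_cast
      rw [← ih, hu]
      simp
      ring
  have := key (g • (empty : NormalWord d))
  rwa [prod_theta, ← hlen_def] at this

theorem atom (g : HNNExtension G A B φ) (u u' : ℤˣ) (s : G)
    (hbr : u' = -u → s ∉ (toSubgroup A B u : Subgroup G))
    (h : hlen d (g * t ^ (u : ℤ)) = hlen d g + 1) :
    hlen d (g * t ^ (u : ℤ) * of s * t ^ (u' : ℤ)) = hlen d g + 2 := by
  set w₀ : NormalWord d := g⁻¹ • (empty : NormalWord d) with hw₀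
  have hLw₀ : w₀.toList.length = hlen d g := by
    rw [← hlen_inv d g]; rfl
  have e1 : (g * t ^ (u : ℤ))⁻¹ • (empty : NormalWord d) = unitsSMul φ (-u) w₀ := by
    rw [mul_inv_rev, ← zpow_neg, mul_smul, hw₀, ← Units.val_neg, t_pow_smul_eq_unitsSMul]
  have h1 : hlen d (g * t ^ (u : ℤ)) = (unitsSMul φ (-u) w₀).toList.length := by
    rw [← hlen_inv, hlen_def, e1]
  have hnc : ¬ Cancels (-u) w₀ := by
    intro hc
    have := length_unitsSMul_of_cancels (φ := φ) d hc
    omega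
  have hw₁len : (unitsSMul φ (-u) w₀).toList.length = hlen d g + 1 := by omega
  have hw₁head : (unitsSMul φ (-u) w₀).head ∈ (toSubgroup A B u : Subgroup G) := by
    have := head_unitsSMul_mem_of_not_cancels (φ := φ) d hnc
    rwa [neg_neg] at this
  have hw₁sign : (unitsSMul φ (-u) w₀).toList.head?.map Prod.fst = some (-u) :=
    head?_unitsSMul_of_not_cancels d hnc
  set w₁ := unitsSMul φ (-u) w₀ with hw₁
  have e2 : (g * t ^ (u : ℤ) * of s * t ^ (u' : ℤ))⁻¹ • (empty : NormalWord d)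
      = unitsSMul φ (-u') ((s⁻¹ : G) • w₁) := by
    rw [mul_inv_rev, ← zpow_neg, mul_smul, ← Units.val_neg, t_pow_smul_eq_unitsSMul]
    congr 1
    rw [mul_inv_rev, mul_smul, e1, ← map_inv, of_smul_eq_smul]
  have hnc2 : ¬ Cancels (-u') ((s⁻¹ : G) • w₁) := by
    rintro ⟨hmem, hsign⟩
    rw [group_smul_toList, neg_neg, hw₁sign] at hsign
    have huu : u' = -u := (Option.some.inj hsign).symm
    subst huu
    rw [neg_neg] at hmem
    refine hbr rfl ?_
    have hs : s⁻¹ ∈ (toSubgroup A B u : Subgroup G) := by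
      have : (s⁻¹ * w₁.head) * w₁.head⁻¹ ∈ (toSubgroup A B u : Subgroup G) :=
        mul_mem hmem (inv_mem hw₁head)
      simpa using this
    simpa using inv_mem hs
  have hfinal : hlen d (g * t ^ (u : ℤ) * of s * t ^ (u' : ℤ))
      = (unitsSMul φ (-u') ((s⁻¹ : G) • w₁)).toList.length := by
    rw [← hlen_inv, hlen_def, e2]
  rw [hfinal, length_unitsSMul_of_not_cancels d hnc2, group_smul_toList]
  omega

theorem units_ne_neg (u : ℤˣ) : u ≠ -u := by
  rcases Int.units_eq_one_or u with rfl | rfl <;> decide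

theorem tail_lemma (w : NormalWord d) (g : HNNExtension G A B φ) (u : ℤˣ)
    (hu : hlen d (g * t ^ (u : ℤ)) = hlen d g + 1)
    (hcomp : ∀ u₁ ∈ Option.map Prod.fst w.toList.head?,
      u₁ = -u → w.head ∉ (toSubgroup A B u : Subgroup G)) :
    hlen d (g * t ^ (u : ℤ) * w.prod φ) = hlen d g + 1 + w.toList.length := by
  induction w using consRecOn generalizing g u with
  | ofGroup g' =>
    rw [prod_ofGroup, hlen_mul_of, hu]
    simp [ofGroup]
  | cons g₀ u₀ w' h1 h2 ih =>
    have hbr : u₀ = -u → g₀ ∉ (toSubgroup A B u : Subgroup G) := by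
      intro h
      exact hcomp u₀ (by simp) h
    have hatom := atom d g u u₀ g₀ hbr hu
    have hg₂ : hlen d (g * t ^ (u : ℤ) * of g₀) = hlen d g + 1 := by
      rw [hlen_mul_of, hu]
    have hu₀ : hlen d ((g * t ^ (u : ℤ) * of g₀) * t ^ (u₀ : ℤ))
        = hlen d (g * t ^ (u : ℤ) * of g₀) + 1 := by
      rw [hg₂, hatom]
    have hcomp' : ∀ u₁ ∈ Option.map Prod.fst w'.toList.head?,
        u₁ = -u₀ → w'.head ∉ (toSubgroup A B u₀ : Subgroup G) := by
      intro u₁ hm heq hmem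
      have := h2 u₁ hm hmem
      rw [this] at heq
      exact units_ne_neg u₁ heq
    have := ih (g * t ^ (u : ℤ) * of g₀) u₀ hu₀ hcomp'
    have e : g * t ^ (u : ℤ) * of g₀ * t ^ (u₀ : ℤ) * w'.prod φ
        = g * t ^ (u : ℤ) * (cons g₀ u₀ w' h1 h2).prod φ := by
      rw [prod_cons]
      group
    rw [e] at this
    rw [this, hg₂]
    simp
    omega

theorem exists_cons (w : NormalWord d) (h : w.toList ≠ []) :
    ∃ (g : G) (u : ℤˣ) (w' : NormalWord d) (h1 : w'.head ∈ d.set u)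
      (h2 : ∀ u' ∈ Option.map Prod.fst w'.toList.head?,
        w'.head ∈ toSubgroup A B u → u = u'),
      w = cons g u w' h1 h2 := by
  induction w using consRecOn with
  | ofGroup g => simp [ofGroup] at h
  | cons g u w' h1 h2 _ => exact ⟨g, u, w', h1, h2, rfl⟩

theorem toAdd_piZ_of_mul_tpow (g₀ : G) (u : ℤˣ) :
    toAdd (piZ φ (of g₀ * t ^ (u : ℤ))) = (u : ℤ) := by
  simp [toAdd_zpow]

theorem step_lemma (y : HNNExtension G A B φ) (hy : 1 ≤ hlen d y) :
    ∃ m, hlen d m = 1 ∧ hlen d (m⁻¹ * y) = hlen d y - 1 ∧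
      ∀ o, hlen d (m⁻¹ * o) ≤ max (hlen d o - 1) (hlen d (y⁻¹ * o) + 1 - hlen d y) := by
  obtain ⟨g₀, u, w, h1, h2, hcons⟩ := exists_cons d (y • (empty : NormalWord d)) (by
    intro hnil
    rw [hlen_def] at hy
    rw [hnil] at hy
    simp at hy)
  have hyprod : y = of g₀ * (t ^ (u : ℤ) * w.prod φ) := by
    conv_lhs => rw [← prod_theta d y, hcons, prod_cons]
  have hlen_y : hlen d y = w.toList.length + 1 := by
    rw [hlen_def, hcons]
    simp
  refine ⟨of g₀ * t ^ (u : ℤ), ?_, ?_, ?_⟩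
  · rw [hlen_of_mul, hlen_tpow]
  · have e : (of g₀ * t ^ (u : ℤ))⁻¹ * y = w.prod φ := by
      rw [hyprod]; group
    rw [e, hlen_prod, hlen_y]
    simp
  · intro o
    set m : HNNExtension G A B φ := of g₀ * t ^ (u : ℤ) with hm
    have hlm : hlen d m = 1 := by rw [hm, hlen_of_mul, hlen_tpow]
    have hub : hlen d (m⁻¹ * o) ≤ hlen d o + 1 := by
      have := hlen_mul_le d m⁻¹ o
      rw [hlen_inv, hlm] at this
      omega
    have hlb : hlen d o ≤ hlen d (m⁻¹ * o) + 1 := by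
      have := hlen_mul_le d m (m⁻¹ * o)
      rw [hlm, ← mul_assoc, mul_inv_cancel, one_mul] at this
      omega
    have hne : hlen d (m⁻¹ * o) ≠ hlen d o := by
      intro heq
      have p1 := hlen_parity d (m⁻¹ * o)
      have p2 := hlen_parity d o
      have hpi : toAdd (piZ φ (m⁻¹ * o)) = toAdd (piZ φ o) - (u : ℤ) := by
        rw [map_mul, toAdd_mul, map_inv, toAdd_inv, hm, toAdd_piZ_of_mul_tpow]
        ring
      rw [heq, p2, hpi] at p1
      have hu := units_cast_zmod u
      rw [Int.cast_sub, hu] at p1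
      have h10 : (1 : ZMod 2) = 0 := by linear_combination p1
      exact one_ne_zero h10
    rcases le_or_gt (hlen d (m⁻¹ * o)) (hlen d o) with hle | hgt
    · have : hlen d (m⁻¹ * o) ≤ hlen d o - 1 := by omega
      exact le_max_of_le_left this
    · have heq : hlen d (m⁻¹ * o) = hlen d o + 1 := by omega
      have hu' : hlen d ((o⁻¹ * of g₀) * t ^ (u : ℤ)) = hlen d (o⁻¹ * of g₀) + 1 := by
        have e1 : (o⁻¹ * of g₀) * t ^ (u : ℤ) = o⁻¹ * m := by rw [hm]; group
        have e2 : hlen d (o⁻¹ * m) = hlen d (m⁻¹ * o) := by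
          rw [← hlen_inv d (o⁻¹ * m)]
          congr 1
          group
        rw [e1, e2, heq, hlen_mul_of, hlen_inv]
      have hcomp : ∀ u₁ ∈ Option.map Prod.fst w.toList.head?,
          u₁ = -u → w.head ∉ (toSubgroup A B u : Subgroup G) := by
        intro u₁ hmem heq' hmem2
        have := h2 u₁ hmem hmem2
        rw [this] at heq'
        exact units_ne_neg u₁ heq'
      have hD := tail_lemma d w (o⁻¹ * of g₀) u hu' hcomp
      have e3 : o⁻¹ * of g₀ * t ^ (u : ℤ) * w.prod φ = o⁻¹ * y := by
        rw [hyprod]; group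
      rw [e3, hlen_mul_of, hlen_inv] at hD
      have e4 : hlen d (y⁻¹ * o) = hlen d o + hlen d y := by
        rw [← hlen_inv d (y⁻¹ * o)]
        have : (y⁻¹ * o)⁻¹ = o⁻¹ * y := by group
        rw [this, hD, hlen_y]
        omega
      rw [e4, heq]
      have : hlen d o + 1 ≤ hlen d o + hlen d y + 1 - hlen d y := by omega
      exact le_max_of_le_right this

theorem conj_into_base (P : Subgroup (HNNExtension G A B φ)) (hPfin : Finite P) :
    ∃ g : HNNExtension G A B φ,
      P.map (MulAut.conj g).toMonoidHom ≤ (of : G →* HNNExtension G A B φ).range := by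
  obtain ⟨d⟩ : Nonempty (TransversalPair G A B) := inferInstance
  letI : Fintype P := Fintype.ofFinite P
  set r : HNNExtension G A B φ → ℕ :=
    fun x => Finset.univ.sup (fun q : P => hlen d (x⁻¹ * (q : HNNExtension G A B φ))) with hr
  set R := sInf (Set.range r) with hRdef
  obtain ⟨v, hv⟩ : ∃ v, r v = R := Nat.sInf_mem (Set.range_nonempty r)
  have hle : ∀ q : P, hlen d (v⁻¹ * (q : HNNExtension G A B φ)) ≤ R := by
    intro q
    rw [← hv, hr]
    exact Finset.le_sup (f := fun q : P => hlen d (v⁻¹ * (q : HNNExtension G A B φ)))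
      (Finset.mem_univ q)
  have claim1 : ∀ q : P, hlen d (v⁻¹ * (q : HNNExtension G A B φ) * v) ≤ 1 := by
    intro q
    by_contra hq
    push_neg at hq
    have hDl : 1 ≤ hlen d (v⁻¹ * (q : HNNExtension G A B φ) * v) := by omega
    have hv0 : hlen d v ≤ R := by
      have := hle 1
      simpa [hlen_inv] using this
    have hRpos : 1 ≤ R := by
      by_contra hR0
      push_neg at hR0
      have h0 : hlen d (v⁻¹ * (q : HNNExtension G A B φ) * v)
          ≤ hlen d (v⁻¹ * (q : HNNExtension G A B φ)) + hlen d v :=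
        hlen_mul_le d _ _
      have := hle q
      omega
    obtain ⟨m, hm1, hm2, hm3⟩ := step_lemma d (v⁻¹ * (q : HNNExtension G A B φ) * v) hDl
    have key : ∀ o : P, hlen d ((v * m)⁻¹ * (o : HNNExtension G A B φ)) ≤ R - 1 := by
      intro o
      have h3 := hm3 (v⁻¹ * (o : HNNExtension G A B φ))
      have e1 : m⁻¹ * (v⁻¹ * (o : HNNExtension G A B φ))
          = (v * m)⁻¹ * (o : HNNExtension G A B φ) := by group
      have e2 : (v⁻¹ * (q : HNNExtension G A B φ) * v)⁻¹ * (v⁻¹ * (o : HNNExtension G A B φ))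
          = v⁻¹ * ((q⁻¹ * o : P) : HNNExtension G A B φ) := by
        push_cast
        group
      rw [e1, e2] at h3
      have b1 : hlen d (v⁻¹ * (o : HNNExtension G A B φ)) ≤ R := hle o
      have b2 : hlen d (v⁻¹ * ((q⁻¹ * o : P) : HNNExtension G A B φ)) ≤ R := hle _
      have hmax : max (hlen d (v⁻¹ * (o : HNNExtension G A B φ)) - 1)
          (hlen d (v⁻¹ * ((q⁻¹ * o : P) : HNNExtension G A B φ)) + 1
            - hlen d (v⁻¹ * (q : HNNExtension G A B φ) * v)) ≤ R - 1 :=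
        max_le (by omega) (by omega)
      omega
    have hrm : r (v * m) ≤ R - 1 := by
      rw [hr]
      exact Finset.sup_le (f := fun o : P => hlen d ((v * m)⁻¹ * (o : HNNExtension G A B φ)))
        (fun o _ => key o)
    have hge : R ≤ r (v * m) := Nat.sInf_le ⟨v * m, rfl⟩
    omega
  have claim2 : ∀ q : P,
      v⁻¹ * (q : HNNExtension G A B φ) * v ∈ (of : G →* HNNExtension G A B φ).range := by
    intro q
    have h1 := claim1 q
    rcases Nat.lt_or_ge (hlen d (v⁻¹ * (q : HNNExtension G A B φ) * v)) 1 with h0 | h0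
    · exact mem_range_of_hlen_eq_zero d (by omega)
    · exfalso
      have hlen1 : hlen d (v⁻¹ * (q : HNNExtension G A B φ) * v) = 1 := by omega
      have hfinq : IsOfFinOrder q := isOfFinOrder_of_finite q
      obtain ⟨n, hn, hqn⟩ := isOfFinOrder_iff_pow_eq_one.mp hfinq
      have hqn' : (q : HNNExtension G A B φ) ^ n = 1 := by
        have := congrArg (Subgroup.subtype P) hqn
        simpa using this
      have hpi0 : toAdd (piZ φ (q : HNNExtension G A B φ)) = 0 := by
        have h2 := congrArg (piZ φ) hqn'
        rw [map_pow, map_one] at h2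
        have h3 := congrArg toAdd h2
        rw [toAdd_pow, toAdd_one] at h3
        have h4 : (n : ℤ) * toAdd (piZ φ (q : HNNExtension G A B φ)) = 0 := by
          rw [← h3]
          simp [nsmul_eq_mul]
        rcases mul_eq_zero.mp h4 with h5 | h5
        · exfalso
          have : (n : ℤ) ≠ 0 := Int.natCast_ne_zero.mpr (by omega)
          exact this h5
        · exact h5
      have hpar := hlen_parity d (v⁻¹ * (q : HNNExtension G A B φ) * v)
      have hpiconj : toAdd (piZ φ (v⁻¹ * (q : HNNExtension G A B φ) * v))
          = toAdd (piZ φ (q : HNNExtension G A B φ)) := by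
        simp only [map_mul, map_inv, toAdd_mul, toAdd_inv]
        ring
      rw [hlen1, hpiconj, hpi0] at hpar
      norm_num at hpar
  refine ⟨v⁻¹, ?_⟩
  rintro x ⟨q, hqP, rfl⟩
  have := claim2 ⟨q, hqP⟩
  simpa [MulAut.conj_apply] using this

end HNNSylowAux


/-- Let `S` be a finite `p`-group, `A B ≤ S` and `f : A ≃* B` an isomorphism.  Then the
image of `S` in the HNN extension `Γ` of `S` along `f` is a Sylow `p`-subgroup of `Γ`:
every finite `p`-subgroup of `Γ` is conjugate in `Γ` to a subgroup of the image of `S`. -/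
theorem stmt_5 (p : ℕ) (hp : Nat.Prime p)
    (S : Type*) [Group S] [Finite S] (hS : IsPGroup p S)
    (A B : Subgroup S) (f : A ≃* B)
    (P : Subgroup (HNNExtension S A B f)) (hPfin : Finite P) (hP : IsPGroup p P) :
    ∃ g : HNNExtension S A B f,
      P.map (MulAut.conj g).toMonoidHom ≤
        (HNNExtension.of : S →* HNNExtension S A B f).range := by
  exact HNNSylowAux.conj_into_base P hPfin
end

section
/- Let C be a small category with the property that for every pair of composable morphisms f: x -> y and g: y -> z, at least one of f and g is an identity morphism. Then there is a partition of the objects of C into two disjoint classes C1 and C2 such that every non-identity morphism of C has its source in C1 and its target in C2. -/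
open CategoryTheory

/-- Let `C` be a small category such that in every composable pair of morphisms at least
one is an identity.  Then the objects of `C` can be partitioned into two disjoint classes
`C₁` and `C₂` such that every non-identity morphism has its source in `C₁` and its target
in `C₂`. -/
theorem stmt_8 (C : Type*) [SmallCategory C]
    (h : ∀ {x y z : C} (f : x ⟶ y) (g : y ⟶ z),
      (∃ hxy : x = y, f = eqToHom hxy) ∨ (∃ hyz : y = z, g = eqToHom hyz)) :
    ∃ C₁ C₂ : Set C, C₁ ∩ C₂ = ∅ ∧ C₁ ∪ C₂ = Set.univ ∧
      ∀ {x y : C} (f : x ⟶ y), ¬ (∃ hxy : x = y, f = eqToHom hxy) →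
        x ∈ C₁ ∧ y ∈ C₂ := by
  classical
  set C₂ : Set C := {y | ∃ (x : C) (f : x ⟶ y), ¬ (∃ hxy : x = y, f = eqToHom hxy)} with hC₂
  refine ⟨C₂ᶜ, C₂, by simp, by simp, ?_⟩
  intro x y f hf
  refine ⟨?_, ⟨x, f, hf⟩⟩
  intro hx
  obtain ⟨w, g, hg⟩ := hx
  rcases h g f with h1 | h1
  · exact hg h1
  · exact hf h1
end
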